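/- The parameters of any linear [n,k,d]_q code satisfy the Griesmer bound: n ≥ ∑_{i=0}^{k-1} ⌈d / q^i⌉. -/

import Mathlib

/-!
Let `c` be a codeword of minimum weight `w ≥ d` and puncture `C` on the support of `c`, getting
the residual code on `n - w` coordinates. Its dimension is at least `k - 1`: a codeword supported
inside the support of `c` is a multiple of `c`, since otherwise subtracting the right multiple of
`c` would leave a nonzero codeword lighter than `c`. Its minimum weight is at least `w / q`: for a
codeword `x`, pigeonholing the values `-xᵢ / cᵢ` over the support of `c` gives a scalar `a` such
that `x + a c` vanishes on at least `w / q` of those coordinates, and `x + a c` still has weight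
at least `w`. Induction on `k` then gives `n - w ≥ ∑_{i<k-1} ⌈w / q^(i+1)⌉`. Taking the lower
bound `d` in an ordered field lets `w / q` be used for the residual code without rounding.
-/

open Finset Module

section HammingRestrict

variable {ι β : Type*} [Fintype ι] [Zero β] [DecidableEq β]

theorem hammingNorm_subtype_restrict (p : ι → Prop) [DecidablePred p] (x : ι → β) :
    hammingNorm (fun i : {i // p i} => x i) = #{i | p i ∧ x i ≠ 0} := by
  rw [hammingNorm, ← Fintype.card_subtype, ← Fintype.card_subtype]
  exact Fintype.card_congr (Equiv.subtypeSubtypeEquivSubtypeInter p (fun i => x i ≠ 0))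

theorem hammingNorm_eq_hammingNorm_subtype_restrict_add (p : ι → Prop) [DecidablePred p]
    (x : ι → β) :
    hammingNorm x = hammingNorm (fun i : {i // p i} => x i) + #{i | ¬p i ∧ x i ≠ 0} := by
  rw [hammingNorm_subtype_restrict, hammingNorm, ← card_filter_add_card_filter_not p]
  simp only [filter_filter, and_comm]

theorem card_zeros_add_hammingNorm (x : ι → β) :
    Fintype.card {i // x i = 0} + hammingNorm x = Fintype.card ι := by
  rw [Fintype.card_subtype, hammingNorm, card_filter_add_card_filter_not, card_univ]

end HammingRestrict

theorem exists_min_hammingNorm {ι F : Type*} [Fintype ι] [Field F] [DecidableEq F]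
    {C : Submodule F (ι → F)} (hC : C ≠ ⊥) :
    ∃ c ∈ C, c ≠ 0 ∧ ∀ x ∈ C, x ≠ 0 → hammingNorm c ≤ hammingNorm x := by
  obtain ⟨c, ⟨hcC, hc0⟩, hmin⟩ := (measure hammingNorm).wf.has_min {x | x ∈ C ∧ x ≠ 0}
    (Submodule.exists_mem_ne_zero_of_ne_bot hC)
  exact ⟨c, hcC, hc0, fun x hxC hx0 => not_lt.1 (hmin x ⟨hxC, hx0⟩)⟩

section ResidualCode

variable {ι F : Type*} [Fintype ι] [Field F] [DecidableEq F]

def residualCode (C : Submodule F (ι → F)) (c : ι → F) : Submodule F ({i // c i = 0} → F) :=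
  C.map (LinearMap.funLeft F F Subtype.val)

variable {C : Submodule F (ι → F)} {c : ι → F}

theorem mem_span_singleton_of_support_subset (hcC : c ∈ C)
    (hmin : ∀ x ∈ C, x ≠ 0 → hammingNorm c ≤ hammingNorm x) {x : ι → F} (hxC : x ∈ C)
    (hxc : Function.support x ⊆ Function.support c) : x ∈ F ∙ c := by
  rcases eq_or_ne c 0 with rfl | hc0
  · simp_all
  obtain ⟨i₀, hi₀⟩ : ∃ i, c i ≠ 0 := Function.ne_iff.1 hc0
  rw [Submodule.mem_span_singleton]
  refine ⟨x i₀ / c i₀, (sub_eq_zero.1 ?_).symm⟩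
  set y := x - (x i₀ / c i₀) • c
  have hyC : y ∈ C := C.sub_mem hxC (C.smul_mem _ hcC)
  -- `supp y ⊊ supp c`: `y` vanishes off `supp c` and at `i₀`
  have hy_lt : hammingNorm y < hammingNorm c := by
    refine card_lt_card ⟨fun i => ?_, fun h => ?_⟩
    · simp only [mem_filter, mem_univ, true_and]
      intro hyi hci
      exact hyi (by simp [y, hci, Function.notMem_support.1 (mt (@hxc i) (by simpa using hci))])
    · have := h (by simpa using hi₀)
      simp [y, hi₀] at this
  by_contra hy0
  exact (hmin y hyC hy0).not_gt hy_lt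

theorem finrank_le_finrank_residualCode_add_one (hcC : c ∈ C)
    (hmin : ∀ x ∈ C, x ≠ 0 → hammingNorm c ≤ hammingNorm x) :
    finrank F C ≤ finrank F (residualCode C c) + 1 := by
  set f := (LinearMap.funLeft F F (Subtype.val : {i // c i = 0} → ι)).domRestrict C
  have hker : LinearMap.ker f ≤ F ∙ (⟨c, hcC⟩ : C) := by
    rintro ⟨x, hxC⟩ hx
    have hxc : Function.support x ⊆ Function.support c := fun i hxi => by
      by_contra hci
      exact hxi (congrFun hx ⟨i, Function.notMem_support.1 hci⟩)
    obtain ⟨a, rfl⟩ := Submodule.mem_span_singleton.1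
      (mem_span_singleton_of_support_subset hcC hmin hxC hxc)
    exact Submodule.mem_span_singleton.2 ⟨a, rfl⟩
  have hker_le : finrank F (LinearMap.ker f) ≤ 1 :=
    (Submodule.finrank_mono hker).trans ((finrank_span_le_card _).trans (by simp))
  rw [← f.finrank_range_add_finrank_ker, LinearMap.range_domRestrict]
  exact Nat.add_le_add_left hker_le _

theorem hammingNorm_le_card_mul_hammingNorm_of_mem_residualCode [Fintype F] (hcC : c ∈ C)
    (hmin : ∀ x ∈ C, x ≠ 0 → hammingNorm c ≤ hammingNorm x) {y : {i // c i = 0} → F}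
    (hy : y ∈ residualCode C c) (hy0 : y ≠ 0) :
    hammingNorm c ≤ Fintype.card F * hammingNorm y := by
  classical
  obtain ⟨x, hxC, hxy⟩ := hy
  set s : Finset ι := {i | c i ≠ 0}
  set q := Fintype.card F
  -- pigeonhole on `i ↦ -x i / c i`: some shift `x + a • c` vanishes on `#s / q` points of `s`
  obtain ⟨a, -, ha⟩ := exists_le_card_fiber_of_nsmul_le_card_of_maps_to
    (s := s) (f := fun i => -x i / c i) (fun i _ => mem_univ _) univ_nonempty
    (b := (#s : ℚ) / q)
    (by rw [card_univ, nsmul_eq_mul, mul_div_cancel₀ _ (Nat.cast_ne_zero.2 Fintype.card_ne_zero)])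
  set t : Finset ι := {i ∈ s | -x i / c i = a}
  set z := x + a • c
  have hzC : z ∈ C := C.add_mem hxC (C.smul_mem a hcC)
  have hz_restrict : (fun i : {i // c i = 0} => z i) = y := by
    ext ⟨i, hci⟩
    simp [← hxy, z, hci, LinearMap.funLeft]
  have hz0 : z ≠ 0 := fun h => hy0 (by rw [← hz_restrict, h]; rfl)
  have hz_supp : #{i | ¬c i = 0 ∧ z i ≠ 0} ≤ #s - #t := by
    rw [← card_sdiff_of_subset (filter_subset _ _)]
    refine card_le_card fun i => ?_
    simp only [mem_filter, mem_sdiff, mem_univ, true_and, s, z]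
    rintro ⟨hci, hzi⟩
    refine ⟨hci, fun hfib => hzi ?_⟩
    simp only [Pi.add_apply, Pi.smul_apply, smul_eq_mul, ← hfib.2, div_mul_cancel₀ _ hci,
      add_neg_cancel]
  have hz_weight := hmin z hzC hz0
  rw [hammingNorm_eq_hammingNorm_subtype_restrict_add (c · = 0) z, hz_restrict] at hz_weight
  have hs : #s = hammingNorm c := rfl
  have ht_le : #t ≤ #s := card_le_card (filter_subset _ _)
  have ht_le_weight : #t ≤ hammingNorm y := by omega
  rw [div_le_iff₀ (Nat.cast_pos.2 (Fintype.card_pos (α := F)))] at ha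
  calc hammingNorm c = #s := hs.symm
    _ ≤ q * #t := by exact_mod_cast ha.trans_eq (mul_comm _ _)
    _ ≤ q * hammingNorm y := by gcongr

end ResidualCode

theorem sum_ceil_div_pow_le_card {K : Type*} [Field K] [LinearOrder K] [IsStrictOrderedRing K]
    [FloorRing K] {ι F : Type*} [Fintype ι] [Field F] [Fintype F] [DecidableEq F]
    (C : Submodule F (ι → F)) {d : K} (hd : ∀ x ∈ C, x ≠ 0 → d ≤ hammingNorm x) {k : ℕ}
    (hk : k ≤ finrank F C) :
    ∑ i ∈ range k, ⌈d / (Fintype.card F : K) ^ i⌉ ≤ Fintype.card ι := by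
  induction k generalizing ι C d with
  | zero => simp
  | succ k ih =>
    have hC : C ≠ ⊥ := fun h => by rw [h, finrank_bot] at hk; omega
    obtain ⟨c, hcC, hc0, hmin⟩ := exists_min_hammingNorm hC
    set q : K := (Fintype.card F : K) with hq_def
    set w := hammingNorm c
    have hq : 0 < q := Nat.cast_pos.2 Fintype.card_pos
    have hres := ih (residualCode C c) (d := w / q)
      (fun y hy hy0 => by
        rw [div_le_iff₀ hq, mul_comm, hq_def]
        exact_mod_cast hammingNorm_le_card_mul_hammingNorm_of_mem_residualCode hcC hmin hy hy0)
      (by have := finrank_le_finrank_residualCode_add_one hcC hmin; omega)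
    calc ∑ i ∈ range (k + 1), ⌈d / q ^ i⌉
        ≤ ∑ i ∈ range (k + 1), ⌈(w : K) / q ^ i⌉ := by
          gcongr
          exact hd c hcC hc0
      _ = ∑ i ∈ range k, ⌈(w / q : K) / q ^ i⌉ + w := by
          simp [sum_range_succ', pow_succ', div_div]
      _ ≤ Fintype.card {i // c i = 0} + w := by gcongr
      _ = Fintype.card ι := by exact_mod_cast card_zeros_add_hammingNorm c

theorem griesmer_bound_general (q n k d : ℕ) (F : Type) [Field F] [Fintype F] [DecidableEq F]
    (hq : Fintype.card F = q)
    (C : Submodule F (Fin n → F))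
    (hk : Module.finrank F C = k)
    (hd_le : ∀ c ∈ C, c ≠ 0 → d ≤ hammingNorm c) :
    (∑ i ∈ Finset.range k, ⌈(d : ℚ) / (q : ℚ) ^ i⌉) ≤ (n : ℤ) := by
  subst hq hk
  simpa using sum_ceil_div_pow_le_card C (d := (d : ℚ))
    (fun c hc hc0 => by exact_mod_cast hd_le c hc hc0) le_rfl

/-- **Griesmer bound.** The parameters of any linear `[n,k,d]_q` code satisfy
`n ≥ ∑_{i=0}^{k-1} ⌈d / qⁱ⌉`.  Here a linear `[n,k,d]_q` code is a `k`-dimensional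
subspace `C` of `GF(q)ⁿ` whose minimum Hamming weight among nonzero codewords is `d`. -/
theorem griesmer_bound (q n k d : ℕ) (F : Type) [Field F] [Fintype F] [DecidableEq F]
    (hq : Fintype.card F = q)
    (C : Submodule F (Fin n → F))
    (hk : Module.finrank F C = k)
    (hd_le : ∀ c ∈ C, c ≠ 0 → d ≤ hammingNorm c)
    (hd_ex : ∃ c ∈ C, c ≠ 0 ∧ hammingNorm c = d) :
    (∑ i ∈ Finset.range k, ⌈(d : ℚ) / (q : ℚ) ^ i⌉) ≤ (n : ℤ) :=
  griesmer_bound_general q n k d F hq C hk hd_le
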